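/- Let {X_{n,i} : 1 ≤ i ≤ n, n ≥ 1} be a triangular array of random variables such that for each n the variables X_{n,1}, …, X_{n,n} are mutually independent with mean zero, and suppose there exist constants 0 < κ < 1 and c < ∞ with n^{−1} Σ_{i=1}^n E|X_{n,i}|^{2+κ} ≤ c n^{κ/2} for all n. Then (1/n) Σ_{i=1}^n X_{n,i} → 0 almost surely as n → ∞. -/

import Mathlib

/-!
Truncate row `n` at level `M = n ^ α`. By Markov's inequality, some entry exceeds `M` with
probability at most `∑ E|X|^(2+κ) / M^(2+κ)`, and truncation moves the mean of the row sum by at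
most `∑ E|X|^(2+κ) / M^(1+κ)`. The centred truncated summands are bounded by `2M`, so
`E e^(tZ) ≤ e^(t² E Z²)` for `t = 1/(2M)`, and a Chernoff bound controls their sum by
`exp (-εn/(4M) + O(n^(1+κ/2)) / M²)`. For `α < 1` close enough to `1` (and `κ < 1`) all these
bounds are summable in `n`, so by Borel–Cantelli `|∑ᵢ X n i| < εn` eventually, for every `ε > 0`.
-/

open MeasureTheory ProbabilityTheory Filter Topology Finset Real

lemma summable_exp_neg_mul_rpow {δ β : ℝ} (hδ : 0 < δ) (hβ : 0 < β) :
    Summable fun n : ℕ => exp (-(δ * (n : ℝ) ^ β)) := by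
  have hpow : Tendsto (fun n : ℕ => (n : ℝ) ^ β) atTop atTop :=
    (tendsto_rpow_atTop hβ).comp tendsto_natCast_atTop_atTop
  have ho : (fun n : ℕ => exp (-(δ * (n : ℝ) ^ β))) =o[atTop] fun n : ℕ => (n : ℝ) ^ (-2 : ℝ) := by
    refine ((isLittleO_exp_neg_mul_rpow_atTop hδ (-2 / β)).comp_tendsto hpow).congr' ?_ ?_
    · simp [Function.comp_def, neg_mul]
    · filter_upwards with n
      rw [Function.comp_apply, ← rpow_mul n.cast_nonneg, mul_div_cancel₀ _ hβ.ne']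
  exact summable_of_isBigO_nat (summable_nat_rpow.2 (by norm_num)) ho.isBigO

lemma ae_eventually_notMem_of_summable_measureReal {α : Type*} [MeasurableSpace α]
    {μ : Measure α} [IsFiniteMeasure μ] {s : ℕ → Set α} (hs : Summable fun n => μ.real (s n)) :
    ∀ᵐ x ∂μ, ∀ᶠ n in atTop, x ∉ s n := by
  refine ae_eventually_notMem ?_
  rw [tsum_congr fun n => (ofReal_measureReal (μ := μ) (s := s n)).symm,
    ← ENNReal.ofReal_tsum_of_nonneg (fun _ => measureReal_nonneg) hs]
  exact ENNReal.ofReal_ne_top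

lemma ae_tendsto_zero_of_forall_ae_eventually_abs_lt {α : Type*} [MeasurableSpace α]
    {μ : Measure α} {u : ℕ → α → ℝ} (h : ∀ ε > 0, ∀ᵐ x ∂μ, ∀ᶠ n in atTop, |u n x| < ε) :
    ∀ᵐ x ∂μ, Tendsto (fun n => u n x) atTop (𝓝 0) := by
  have hk : ∀ᵐ x ∂μ, ∀ k : ℕ, ∀ᶠ n in atTop, |u n x| < 1 / (k + 1) :=
    ae_all_iff.2 fun k => h _ Nat.one_div_pos_of_nat
  filter_upwards [hk] with x hx
  refine Metric.tendsto_nhds.2 fun ε hε => ?_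
  obtain ⟨k, hk⟩ := exists_nat_one_div_lt hε
  filter_upwards [hx k] with n hn
  rw [dist_zero_right, norm_eq_abs]
  exact hn.trans hk

lemma mgf_le_exp_sq_mul_integral_sq {Ω : Type*} [MeasurableSpace Ω] {P : Measure Ω}
    [IsProbabilityMeasure P] {Z : Ω → ℝ} (hZ : Measurable Z) {L t : ℝ} (hbd : ∀ ω, |Z ω| ≤ L)
    (hmean : ∫ ω, Z ω ∂P = 0) (ht : 0 ≤ t) (htL : t * L ≤ 1) :
    mgf Z P t ≤ exp (t ^ 2 * ∫ ω, Z ω ^ 2 ∂P) := by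
  have hZint : Integrable Z P := .of_bound hZ.aestronglyMeasurable L (.of_forall hbd)
  have hZ2int : Integrable (fun ω => Z ω ^ 2) P :=
    .of_bound (hZ.pow_const 2).aestronglyMeasurable (L ^ 2) (.of_forall fun ω => by
      rw [norm_pow, norm_eq_abs]; exact pow_le_pow_left₀ (abs_nonneg _) (hbd ω) 2)
  have hlin : Integrable (fun ω => 1 + t * Z ω) P := (integrable_const 1).add (hZint.const_mul t)
  have hquad : Integrable (fun ω => 1 + t * Z ω + (t * Z ω) ^ 2) P := by
    simp_rw [mul_pow]
    exact hlin.add (hZ2int.const_mul _)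
  have hexp_le : ∀ ω, exp (t * Z ω) ≤ 1 + t * Z ω + (t * Z ω) ^ 2 := fun ω => by
    have hsmall : |t * Z ω| ≤ 1 := by
      rw [abs_mul, abs_of_nonneg ht]
      exact (mul_le_mul_of_nonneg_left (hbd ω) ht).trans htL
    linarith [(abs_le.1 (abs_exp_sub_one_sub_id_le hsmall)).2]
  calc mgf Z P t ≤ ∫ ω, (1 + t * Z ω + (t * Z ω) ^ 2) ∂P :=
        integral_mono_of_nonneg (.of_forall fun ω => (exp_pos _).le) hquad (.of_forall hexp_le)
    _ = 1 + t ^ 2 * ∫ ω, Z ω ^ 2 ∂P := by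
        simp_rw [mul_pow]
        rw [integral_add hlin (hZ2int.const_mul _),
          integral_add (integrable_const 1) (hZint.const_mul t), integral_const_mul,
          integral_const_mul, hmean]
        simp
    _ ≤ exp (t ^ 2 * ∫ ω, Z ω ^ 2 ∂P) := by linarith [add_one_le_exp (t ^ 2 * ∫ ω, Z ω ^ 2 ∂P)]

section Bernstein

variable {Ω ι : Type*} [MeasurableSpace Ω] {P : Measure Ω} [IsProbabilityMeasure P] [Fintype ι]
  {Z : ι → Ω → ℝ} {L t a V : ℝ}

lemma measureReal_sum_ge_le_of_iIndepFun_of_abs_le (hmeas : ∀ i, Measurable (Z i))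
    (hindep : iIndepFun Z P) (hbd : ∀ i ω, |Z i ω| ≤ L) (hmean : ∀ i, ∫ ω, Z i ω ∂P = 0)
    (ht : 0 ≤ t) (htL : t * L ≤ 1) (hV : ∑ i, ∫ ω, Z i ω ^ 2 ∂P ≤ V) :
    P.real {ω | a ≤ ∑ i, Z i ω} ≤ exp (-t * a + t ^ 2 * V) := by
  have hsum_meas : Measurable fun ω => ∑ i, Z i ω := Finset.measurable_sum _ fun i _ => hmeas i
  have hexp_int : Integrable (fun ω => exp (t * ∑ i, Z i ω)) P := by
    refine .of_bound (hsum_meas.const_mul t).exp.aestronglyMeasurable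
      (exp (t * ∑ _i : ι, L)) (.of_forall fun ω => ?_)
    rw [norm_eq_abs, abs_exp]
    gcongr with i
    exact (abs_le.1 (hbd i ω)).2
  have hmgf : mgf (fun ω => ∑ i, Z i ω) P t = ∏ i, mgf (Z i) P t := by
    rw [← hindep.mgf_sum hmeas]
    congr 1
    ext ω
    simp
  calc P.real {ω | a ≤ ∑ i, Z i ω} ≤ exp (-t * a) * ∏ i, mgf (Z i) P t :=
        hmgf ▸ measure_ge_le_exp_mul_mgf a ht hexp_int
    _ ≤ exp (-t * a) * ∏ i, exp (t ^ 2 * ∫ ω, Z i ω ^ 2 ∂P) := by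
        gcongr with i
        · exact fun i _ => mgf_nonneg
        · exact mgf_le_exp_sq_mul_integral_sq (hmeas i) (hbd i) (hmean i) ht htL
    _ ≤ exp (-t * a + t ^ 2 * V) := by
        rw [← exp_sum, ← exp_add, ← Finset.mul_sum]
        gcongr

lemma measureReal_abs_sum_ge_le_of_iIndepFun_of_abs_le (hmeas : ∀ i, Measurable (Z i))
    (hindep : iIndepFun Z P) (hbd : ∀ i ω, |Z i ω| ≤ L) (hmean : ∀ i, ∫ ω, Z i ω ∂P = 0)
    (ht : 0 ≤ t) (htL : t * L ≤ 1) (hV : ∑ i, ∫ ω, Z i ω ^ 2 ∂P ≤ V) :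
    P.real {ω | a ≤ |∑ i, Z i ω|} ≤ 2 * exp (-t * a + t ^ 2 * V) := by
  have hupper :=
    measureReal_sum_ge_le_of_iIndepFun_of_abs_le (a := a) hmeas hindep hbd hmean ht htL hV
  have hlower := measureReal_sum_ge_le_of_iIndepFun_of_abs_le (a := a) (Z := fun i ω => -Z i ω)
    (fun i => (hmeas i).neg) (hindep.comp (fun _ x => -x) fun _ => measurable_neg)
    (fun i ω => (abs_neg (Z i ω)).trans_le (hbd i ω))
    (fun i => by rw [integral_neg, hmean i, neg_zero]) ht htL (by simpa using hV)
  have hsplit : {ω | a ≤ |∑ i, Z i ω|} =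
      {ω | a ≤ ∑ i, Z i ω} ∪ {ω | a ≤ ∑ i, -Z i ω} := by
    ext ω
    simp [le_abs]
  calc P.real {ω | a ≤ |∑ i, Z i ω|}
      ≤ P.real {ω | a ≤ ∑ i, Z i ω} + P.real {ω | a ≤ ∑ i, -Z i ω} :=
        hsplit ▸ measureReal_union_le _ _
    _ ≤ 2 * exp (-t * a + t ^ 2 * V) := by linarith

end Bernstein

section Truncation

variable {α : Type*}

lemma sq_truncation_le_one_add_abs_rpow (f : α → ℝ) (A : ℝ) {p : ℝ} (hp : 2 ≤ p) (x : α) :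
    truncation f A x ^ 2 ≤ 1 + |f x| ^ p := by
  have hle := abs_truncation_le_abs_self f A x
  rcases le_or_gt |truncation f A x| 1 with hsmall | hlarge
  · have : truncation f A x ^ 2 ≤ 1 := by
      rw [← sq_abs]; exact pow_le_one₀ (abs_nonneg _) hsmall
    linarith [rpow_nonneg (abs_nonneg (f x)) p]
  · calc truncation f A x ^ 2 = |truncation f A x| ^ (2 : ℝ) := by
          rw [rpow_two, sq_abs]
      _ ≤ |f x| ^ (2 : ℝ) := by gcongr
      _ ≤ |f x| ^ p := rpow_le_rpow_of_exponent_le (hlarge.le.trans hle) hp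
      _ ≤ 1 + |f x| ^ p := by linarith

lemma abs_sub_truncation_le (f : α → ℝ) {A p : ℝ} (hA : 0 < A) (hp : 1 ≤ p) (x : α) :
    |f x - truncation f A x| ≤ |f x| ^ p / A ^ (p - 1) := by
  rcases lt_or_ge |f x| A with hsmall | hlarge
  · rw [truncation_eq_self hsmall, sub_self, abs_zero]
    positivity
  have hf : 0 < |f x| := hA.trans_le hlarge
  have hdiff : |f x - truncation f A x| ≤ |f x| := by
    simp only [truncation, Function.comp_apply, Set.indicator, id]
    split_ifs <;> simp
  calc |f x - truncation f A x| ≤ |f x| := hdiff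
    _ = |f x| ^ p / |f x| ^ (p - 1) := by
        rw [rpow_sub_one hf.ne', div_div_cancel₀ (rpow_pos_of_pos hf p).ne']
    _ ≤ |f x| ^ p / A ^ (p - 1) := by gcongr

variable [MeasurableSpace α] {μ : Measure α} {f : α → ℝ} {A p : ℝ}

lemma abs_integral_truncation_le [IsFiniteMeasure μ] (hf : Integrable f μ)
    (hmean : ∫ x, f x ∂μ = 0) (hfp : Integrable (fun x => |f x| ^ p) μ) (hA : 0 < A)
    (hp : 1 ≤ p) :
    |∫ x, truncation f A x ∂μ| ≤ (∫ x, |f x| ^ p ∂μ) / A ^ (p - 1) := by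
  have htrunc : Integrable (truncation f A) μ := hf.aestronglyMeasurable.integrable_truncation
  calc |∫ x, truncation f A x ∂μ| = |∫ x, (f x - truncation f A x) ∂μ| := by
        rw [integral_sub hf htrunc, hmean, zero_sub, abs_neg]
    _ ≤ ∫ x, |f x - truncation f A x| ∂μ := abs_integral_le_integral_abs
    _ ≤ ∫ x, |f x| ^ p / A ^ (p - 1) ∂μ :=
        integral_mono (hf.sub htrunc).abs (hfp.div_const _) (abs_sub_truncation_le f hA hp)
    _ = (∫ x, |f x| ^ p ∂μ) / A ^ (p - 1) := integral_div _ _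

lemma abs_truncation_sub_integral_le [IsProbabilityMeasure μ] (hA : 0 < A) (x : α) :
    |truncation f A x - ∫ y, truncation f A y ∂μ| ≤ 2 * A := by
  have htrunc_le : ∀ y, |truncation f A y| ≤ A := fun y =>
    (abs_truncation_le_bound _ _ _).trans_eq (abs_of_pos hA)
  have hmean_le : |∫ y, truncation f A y ∂μ| ≤ A := by
    simpa using norm_integral_le_of_norm_le_const (μ := μ) (f := truncation f A)
      (.of_forall htrunc_le)
  linarith [abs_sub (truncation f A x) (∫ y, truncation f A y ∂μ), htrunc_le x]

lemma integral_sq_sub_integral_truncation_le [IsProbabilityMeasure μ]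
    (hf : AEStronglyMeasurable f μ) (hfp : Integrable (fun x => |f x| ^ p) μ) (hp : 2 ≤ p) :
    ∫ x, (truncation f A x - ∫ y, truncation f A y ∂μ) ^ 2 ∂μ ≤ 1 + ∫ x, |f x| ^ p ∂μ := by
  have hsq : Integrable (fun x => truncation f A x ^ 2) μ := hf.memLp_truncation.integrable_sq
  calc ∫ x, (truncation f A x - ∫ y, truncation f A y ∂μ) ^ 2 ∂μ
      = variance (truncation f A) μ := (variance_eq_integral hf.truncation.aemeasurable).symm
    _ ≤ ∫ x, truncation f A x ^ 2 ∂μ := variance_le_expectation_sq hf.truncation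
    _ ≤ ∫ x, (1 + |f x| ^ p) ∂μ :=
        integral_mono hsq ((integrable_const 1).add hfp)
          (sq_truncation_le_one_add_abs_rpow f A hp)
    _ = 1 + ∫ x, |f x| ^ p ∂μ := by
        rw [integral_add (integrable_const 1) hfp, integral_const]; simp

lemma measureReal_le_abs_le_integral_rpow_div [IsFiniteMeasure μ]
    (hfp : Integrable (fun x => |f x| ^ p) μ) (hA : 0 < A) (hp : 0 ≤ p) :
    μ.real {x | A ≤ |f x|} ≤ (∫ x, |f x| ^ p ∂μ) / A ^ p := by
  have hsub : {x | A ≤ |f x|} ⊆ {x | A ^ p ≤ |f x| ^ p} := fun x hx =>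
    rpow_le_rpow hA.le hx hp
  rw [le_div_iff₀' (rpow_pos_of_pos hA p)]
  calc A ^ p * μ.real {x | A ≤ |f x|} ≤ A ^ p * μ.real {x | A ^ p ≤ |f x| ^ p} := by
        gcongr
        exact measure_ne_top μ _
    _ ≤ ∫ x, |f x| ^ p ∂μ :=
        mul_meas_ge_le_integral_of_nonneg (.of_forall fun x => rpow_nonneg (abs_nonneg _) p) hfp _

end Truncation

section RowBound

variable {Ω ι : Type*} [MeasurableSpace Ω] {P : Measure Ω} [IsProbabilityMeasure P] [Fintype ι]
  {W : ι → Ω → ℝ} {p M T a : ℝ}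

lemma measureReal_exists_le_abs_le (hmomint : ∀ i, Integrable (fun ω => |W i ω| ^ p) P)
    (hT : ∑ i, ∫ ω, |W i ω| ^ p ∂P ≤ T) (hM : 0 < M) (hp : 0 ≤ p) :
    P.real {ω | ∃ i, M ≤ |W i ω|} ≤ T / M ^ p := by
  have hunion : {ω | ∃ i, M ≤ |W i ω|} = ⋃ i, {ω | M ≤ |W i ω|} := by ext; simp
  calc P.real {ω | ∃ i, M ≤ |W i ω|} ≤ ∑ i, P.real {ω | M ≤ |W i ω|} :=
        hunion ▸ measureReal_iUnion_fintype_le _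
    _ ≤ ∑ i, (∫ ω, |W i ω| ^ p ∂P) / M ^ p := by
        gcongr with i
        exact measureReal_le_abs_le_integral_rpow_div (hmomint i) hM hp
    _ ≤ T / M ^ p := by rw [← Finset.sum_div]; gcongr

lemma abs_sum_integral_truncation_le (hint : ∀ i, Integrable (W i) P)
    (hmean : ∀ i, ∫ ω, W i ω ∂P = 0) (hp : 1 ≤ p)
    (hmomint : ∀ i, Integrable (fun ω => |W i ω| ^ p) P) (hT : ∑ i, ∫ ω, |W i ω| ^ p ∂P ≤ T)
    (hM : 0 < M) :
    |∑ i, ∫ ω, truncation (W i) M ω ∂P| ≤ T / M ^ (p - 1) :=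
  calc |∑ i, ∫ ω, truncation (W i) M ω ∂P| ≤ ∑ i, |∫ ω, truncation (W i) M ω ∂P| :=
        Finset.abs_sum_le_sum_abs _ _
    _ ≤ ∑ i, (∫ ω, |W i ω| ^ p ∂P) / M ^ (p - 1) := by
        gcongr with i
        exact abs_integral_truncation_le (hint i) (hmean i) (hmomint i) hM hp
    _ ≤ T / M ^ (p - 1) := by rw [← Finset.sum_div]; gcongr

lemma measureReal_le_abs_sum_truncation_sub_integral_le (hmeas : ∀ i, Measurable (W i))
    (hindep : iIndepFun W P) (hp : 2 ≤ p) (hmomint : ∀ i, Integrable (fun ω => |W i ω| ^ p) P)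
    (hT : ∑ i, ∫ ω, |W i ω| ^ p ∂P ≤ T) (hM : 0 < M) :
    P.real {ω | a ≤ |∑ i, (truncation (W i) M ω - ∫ ω', truncation (W i) M ω' ∂P)|} ≤
      2 * exp (-(a / (2 * M)) + (Fintype.card ι + T) / (4 * M ^ 2)) := by
  set Z : ι → Ω → ℝ := fun i ω => truncation (W i) M ω - ∫ ω', truncation (W i) M ω' ∂P
  have htrunc_meas : Measurable (Set.indicator (Set.Ioc (-M) M) id : ℝ → ℝ) :=
    measurable_id.indicator measurableSet_Ioc
  have hZindep : iIndepFun Z P :=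
    hindep.comp (fun i x => Set.indicator (Set.Ioc (-M) M) id x - ∫ ω', truncation (W i) M ω' ∂P)
      fun i => htrunc_meas.sub_const _
  have hZmean : ∀ i, ∫ ω, Z i ω ∂P = 0 := fun i => by
    rw [integral_sub (hmeas i).aestronglyMeasurable.integrable_truncation (integrable_const _)]
    simp
  have hV : ∑ i, ∫ ω, Z i ω ^ 2 ∂P ≤ Fintype.card ι + T :=
    calc ∑ i, ∫ ω, Z i ω ^ 2 ∂P ≤ ∑ i, (1 + ∫ ω, |W i ω| ^ p ∂P) := by
          gcongr with i
          exact integral_sq_sub_integral_truncation_le (hmeas i).aestronglyMeasurable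
            (hmomint i) hp
      _ ≤ Fintype.card ι + T := by
          rw [Finset.sum_add_distrib]; simp only [sum_const, card_univ, nsmul_one]; linarith
  have hexponent : -(1 / (2 * M)) * a + (1 / (2 * M)) ^ 2 * (Fintype.card ι + T) =
      -(a / (2 * M)) + (Fintype.card ι + T) / (4 * M ^ 2) := by
    field_simp; ring
  rw [← hexponent]
  exact measureReal_abs_sum_ge_le_of_iIndepFun_of_abs_le
    (fun i => (htrunc_meas.comp (hmeas i)).sub_const _) hZindep
    (fun i => abs_truncation_sub_integral_le hM) hZmean (by positivity) (by field_simp; rfl) hV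

theorem measureReal_two_mul_le_abs_sum_le (hmeas : ∀ i, Measurable (W i))
    (hindep : iIndepFun W P) (hint : ∀ i, Integrable (W i) P) (hmean : ∀ i, ∫ ω, W i ω ∂P = 0)
    (hp : 2 ≤ p) (hmomint : ∀ i, Integrable (fun ω => |W i ω| ^ p) P)
    (hT : ∑ i, ∫ ω, |W i ω| ^ p ∂P ≤ T) (hM : 0 < M) (ha : T / M ^ (p - 1) ≤ a) :
    P.real {ω | 2 * a ≤ |∑ i, W i ω|} ≤
      T / M ^ p + 2 * exp (-(a / (2 * M)) + (Fintype.card ι + T) / (4 * M ^ 2)) := by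
  set m : ι → ℝ := fun i => ∫ ω, truncation (W i) M ω ∂P
  have hcenter : |∑ i, m i| ≤ a :=
    (abs_sum_integral_truncation_le hint hmean (by linarith) hmomint hT hM).trans ha
  have hsub : {ω | 2 * a ≤ |∑ i, W i ω|} ⊆
      {ω | ∃ i, M ≤ |W i ω|} ∪ {ω | a ≤ |∑ i, (truncation (W i) M ω - m i)|} := by
    intro ω hω
    by_cases hlarge : ∃ i, M ≤ |W i ω|
    · exact Or.inl hlarge
    push Not at hlarge
    have hsum : ∑ i, (truncation (W i) M ω - m i) = ∑ i, W i ω - ∑ i, m i := by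
      simp only [Finset.sum_sub_distrib, truncation_eq_self (hlarge _)]
    right
    change 2 * a ≤ |∑ i, W i ω| at hω
    change a ≤ |∑ i, (truncation (W i) M ω - m i)|
    rw [hsum]
    linarith [abs_sub_abs_le_abs_sub (∑ i, W i ω) (∑ i, m i)]
  calc P.real {ω | 2 * a ≤ |∑ i, W i ω|}
      ≤ P.real {ω | ∃ i, M ≤ |W i ω|} +
          P.real {ω | a ≤ |∑ i, (truncation (W i) M ω - m i)|} :=
        (measureReal_mono hsub).trans (measureReal_union_le _ _)
    _ ≤ T / M ^ p + 2 * exp (-(a / (2 * M)) + (Fintype.card ι + T) / (4 * M ^ 2)) := by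
        gcongr
        · exact measureReal_exists_le_abs_le hmomint hT hM (by linarith)
        · exact measureReal_le_abs_sum_truncation_sub_integral_le hmeas hindep hp hmomint hT hM

end RowBound

lemma eventually_const_mul_rpow_le {e : ℝ} (he : e < 0) (c : ℝ) {b : ℝ} (hb : 0 < b) :
    ∀ᶠ n : ℕ in atTop, c * (n : ℝ) ^ e ≤ b := by
  have hlim : Tendsto (fun n : ℕ => c * (n : ℝ) ^ e) atTop (𝓝 (c * 0)) :=
    ((tendsto_rpow_neg_atTop (neg_pos.2 he)).comp tendsto_natCast_atTop_atTop).const_mul c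
      |>.congr fun n => by simp
  exact (mul_zero c ▸ hlim).eventually_le_const hb

lemma add_div_four_mul_rpow_sq_le {x κ c α ε : ℝ} (hx : 1 ≤ x) (hκ : 0 ≤ κ)
    (hvar : (1 + c) / 4 * x ^ (κ / 2 - α) ≤ ε / 8) :
    (x + c * x ^ (1 + κ / 2)) / (4 * (x ^ α) ^ 2) ≤ ε / 8 * x ^ (1 - α) := by
  have hx0 : 0 < x := one_pos.trans_le hx
  have hx_le : x ≤ x ^ (1 + κ / 2) :=
    (rpow_one x).symm.trans_le (rpow_le_rpow_of_exponent_le hx (by linarith))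
  have hsplit : x ^ (1 + κ / 2) = x ^ (κ / 2 - α) * x ^ (1 - α) * (x ^ α) ^ 2 := by
    rw [← rpow_natCast, ← rpow_mul hx0.le, ← rpow_add hx0, ← rpow_add hx0]
    ring_nf
  calc (x + c * x ^ (1 + κ / 2)) / (4 * (x ^ α) ^ 2)
      ≤ (1 + c) * x ^ (1 + κ / 2) / (4 * (x ^ α) ^ 2) := by gcongr; linarith
    _ = (1 + c) / 4 * x ^ (κ / 2 - α) * x ^ (1 - α) := by
        rw [hsplit]; field_simp
    _ ≤ ε / 8 * x ^ (1 - α) := by gcongr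

lemma measureReal_mul_le_abs_sum_le {Ω : Type*} [MeasurableSpace Ω] {P : Measure Ω}
    [IsProbabilityMeasure P] {n : ℕ} {W : Fin n → Ω → ℝ} {κ c α ε : ℝ} (hn : 0 < n)
    (hmeas : ∀ i, Measurable (W i)) (hindep : iIndepFun W P) (hint : ∀ i, Integrable (W i) P)
    (hmean : ∀ i, ∫ ω, W i ω ∂P = 0) (hκ : 0 ≤ κ)
    (hmomint : ∀ i, Integrable (fun ω => |W i ω| ^ (2 + κ)) P)
    (hmom : ∑ i, ∫ ω, |W i ω| ^ (2 + κ) ∂P ≤ c * (n : ℝ) ^ (1 + κ / 2))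
    (hcenter : c * (n : ℝ) ^ (κ / 2 - α * (1 + κ)) ≤ ε / 2)
    (hvar : (1 + c) / 4 * (n : ℝ) ^ (κ / 2 - α) ≤ ε / 8) :
    P.real {ω | ε * n ≤ |∑ i, W i ω|} ≤
      c * (n : ℝ) ^ (1 + κ / 2 - α * (2 + κ)) + 2 * exp (-(ε / 8 * (n : ℝ) ^ (1 - α))) := by
  have hn0 : (0 : ℝ) < n := Nat.cast_pos.2 hn
  have ha : c * (n : ℝ) ^ (1 + κ / 2) / ((n : ℝ) ^ α) ^ (2 + κ - 1) ≤ ε * n / 2 :=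
    calc c * (n : ℝ) ^ (1 + κ / 2) / ((n : ℝ) ^ α) ^ (2 + κ - 1)
        = c * (n : ℝ) ^ (κ / 2 - α * (1 + κ)) * n := by
          rw [← rpow_mul hn0.le, mul_div_assoc, ← rpow_sub hn0, mul_assoc, ← rpow_add_one hn0.ne']
          ring_nf
      _ ≤ ε * n / 2 := by nlinarith
  have hrow := measureReal_two_mul_le_abs_sum_le hmeas hindep hint hmean (by linarith) hmomint
    hmom (rpow_pos_of_pos hn0 α) ha
  rw [mul_div_cancel₀ _ two_ne_zero, Fintype.card_fin] at hrow
  refine hrow.trans (add_le_add (le_of_eq ?_) ?_)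
  · rw [← rpow_mul hn0.le, mul_div_assoc, ← rpow_sub hn0]
  have hdrift : ε * n / 2 / (2 * (n : ℝ) ^ α) = ε / 4 * (n : ℝ) ^ (1 - α) := by
    rw [rpow_sub hn0, rpow_one]; ring
  have hvariance := add_div_four_mul_rpow_sq_le (Nat.one_le_cast.2 hn) hκ hvar
  gcongr
  linarith

lemma summable_measureReal_mul_le_abs_sum {Ω : Type*} [MeasurableSpace Ω] {P : Measure Ω}
    [IsProbabilityMeasure P] {X : ℕ → ℕ → Ω → ℝ} (hmeas : ∀ n i, Measurable (X n i))
    (hindep : ∀ n : ℕ, iIndepFun (fun i : Fin n => X n i) P)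
    (hint : ∀ n : ℕ, ∀ i < n, Integrable (X n i) P)
    (hmean : ∀ n : ℕ, ∀ i < n, ∫ ω, X n i ω ∂P = 0) {κ c ε : ℝ} (hκ0 : 0 < κ) (hκ1 : κ < 1)
    (hmomint : ∀ n : ℕ, ∀ i < n, Integrable (fun ω => |X n i ω| ^ (2 + κ)) P)
    (hmom : ∀ n : ℕ,
      (∑ i ∈ Finset.range n, ∫ ω, |X n i ω| ^ (2 + κ) ∂P) / (n : ℝ) ≤ c * (n : ℝ) ^ (κ / 2))
    (hε : 0 < ε) :
    Summable fun n : ℕ => P.real {ω | ε * n ≤ |∑ i ∈ Finset.range n, X n i ω|} := by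
  -- `α` makes the Markov term `c n^(-1-κ/4)`, and `3/4 < α` makes the other two exponents negative
  set α := 1 - κ / (4 * (2 + κ))
  have hα : 3 / 4 < α := by
    have : κ / (4 * (2 + κ)) < 1 / 4 := by rw [div_lt_iff₀ (by positivity)]; linarith
    linarith
  have hα1 : α < 1 := sub_lt_self 1 (by positivity)
  have htail : 1 + κ / 2 - α * (2 + κ) = -1 - κ / 4 := by
    simp only [α]; field_simp; ring
  have hbound : Summable fun n : ℕ =>
      c * (n : ℝ) ^ (-1 - κ / 4) + 2 * exp (-(ε / 8 * (n : ℝ) ^ (1 - α))) :=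
    ((summable_nat_rpow.2 (by linarith)).mul_left c).add
      ((summable_exp_neg_mul_rpow (by positivity) (by linarith)).mul_left 2)
  refine hbound.of_norm_bounded_eventually_nat ?_
  filter_upwards [eventually_const_mul_rpow_le (by nlinarith : κ / 2 - α * (1 + κ) < 0) c
      (half_pos hε), eventually_const_mul_rpow_le (by linarith : κ / 2 - α < 0) ((1 + c) / 4)
      (by positivity : 0 < ε / 8), eventually_gt_atTop 0] with n hcenter hvar hn
  have hn0 : (0 : ℝ) < n := Nat.cast_pos.2 hn
  have hrow_mom : ∑ i : Fin n, ∫ ω, |X n i ω| ^ (2 + κ) ∂P ≤ c * (n : ℝ) ^ (1 + κ / 2) := by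
    rw [Fin.sum_univ_eq_sum_range (fun i => ∫ ω, |X n i ω| ^ (2 + κ) ∂P),
      show 1 + κ / 2 = κ / 2 + 1 by ring, rpow_add_one hn0.ne', ← mul_assoc, ← div_le_iff₀ hn0]
    exact hmom n
  rw [norm_of_nonneg measureReal_nonneg, ← htail]
  simp_rw [Finset.sum_range]
  exact
    measureReal_mul_le_abs_sum_le hn (fun i => hmeas n i) (hindep n) (fun i => hint n i i.isLt)
      (fun i => hmean n i i.isLt) hκ0.le (fun i => hmomint n i i.isLt) hrow_mom hcenter hvar

theorem slln_triangular_array_general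
    {Ω : Type*} [MeasurableSpace Ω] (P : Measure Ω) [IsProbabilityMeasure P]
    (X : ℕ → ℕ → Ω → ℝ)
    (hmeas : ∀ n i, Measurable (X n i))
    (hindep : ∀ n : ℕ,
      iIndepFun (fun i : Fin n => X n i) P)
    (hint : ∀ n : ℕ, ∀ i < n, Integrable (X n i) P)
    (hmean : ∀ n : ℕ, ∀ i < n, ∫ ω, X n i ω ∂P = 0)
    (κ : ℝ) (hκ0 : 0 < κ) (hκ1 : κ < 1) (c : ℝ)
    (hmomint : ∀ n : ℕ, ∀ i < n, Integrable (fun ω => |X n i ω| ^ (2 + κ)) P)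
    (hmom : ∀ n : ℕ,
      (∑ i ∈ Finset.range n, ∫ ω, |X n i ω| ^ (2 + κ) ∂P) / (n : ℝ)
        ≤ c * (n : ℝ) ^ (κ / 2)) :
    ∀ᵐ ω ∂P, Tendsto (fun n : ℕ => (∑ i ∈ Finset.range n, X n i ω) / (n : ℝ))
      atTop (𝓝 0) := by
  refine ae_tendsto_zero_of_forall_ae_eventually_abs_lt fun ε hε => ?_
  have hsummable := summable_measureReal_mul_le_abs_sum hmeas hindep hint hmean hκ0 hκ1 hmomint
    hmom hε
  filter_upwards [ae_eventually_notMem_of_summable_measureReal hsummable] with ω hω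
  filter_upwards [hω, eventually_gt_atTop 0] with n hsmall hn
  have hn0 : (0 : ℝ) < n := Nat.cast_pos.2 hn
  rw [abs_div, abs_of_pos hn0, div_lt_iff₀ hn0]
  exact not_le.1 hsmall

/-- Strong law of large numbers for triangular arrays: if for each `n`
the row `X_{n,0}, …, X_{n,n-1}` consists of mutually independent, mean-zero random
variables and `n⁻¹ ∑_{i<n} E|X_{n,i}|^{2+κ} ≤ c n^{κ/2}` for constants `0 < κ < 1`
and `c < ∞`, then `(1/n) ∑_{i<n} X_{n,i} → 0` almost surely. -/
theorem slln_triangular_array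
    {Ω : Type*} [MeasurableSpace Ω] (P : Measure Ω) [IsProbabilityMeasure P]
    (X : ℕ → ℕ → Ω → ℝ)
    (hmeas : ∀ n i, Measurable (X n i))
    (hindep : ∀ n : ℕ,
      iIndepFun (fun i : Fin n => X n i) P)
    (hint : ∀ n : ℕ, ∀ i < n, Integrable (X n i) P)
    (hmean : ∀ n : ℕ, ∀ i < n, ∫ ω, X n i ω ∂P = 0)
    (κ : ℝ) (hκ0 : 0 < κ) (hκ1 : κ < 1) (c : ℝ) (hc : 0 ≤ c)
    (hmomint : ∀ n : ℕ, ∀ i < n, Integrable (fun ω => |X n i ω| ^ (2 + κ)) P)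
    (hmom : ∀ n : ℕ,
      (∑ i ∈ Finset.range n, ∫ ω, |X n i ω| ^ (2 + κ) ∂P) / (n : ℝ)
        ≤ c * (n : ℝ) ^ (κ / 2)) :
    ∀ᵐ ω ∂P, Tendsto (fun n : ℕ => (∑ i ∈ Finset.range n, X n i ω) / (n : ℝ))
      atTop (𝓝 0) :=
  slln_triangular_array_general P X hmeas hindep hint hmean κ hκ0 hκ1 c hmomint hmom
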